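/- arXiv:1503.07131 — 7 statements merged into one kernel-verified Lean document; each statement's English description precedes it below -/
import Mathlib

section
/- Let G be a connected non-bipartite simple graph and γ : V(G) → R any function. Then there exists a function ω : E(G) → R such that for every vertex v, the sum of ω(e) over all edges e incident to v equals γ(v). -/
/-!
The flow condition says `G.incMatrix ℝ *ᵥ ω = γ`, so it suffices that the unsigned incidence
matrix has linearly independent rows, i.e. that `c ᵥ* G.incMatrix ℝ = 0` forces `c = 0`.
Such a `c` satisfies `c u + c v = 0` along every edge. On a connected graph it is then either
identically zero or nowhere zero, and in the latter case its sign is a proper 2-colouring.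
-/

open Matrix

theorem Matrix.mulVec_surjective_of_vecMul_injective {m n K : Type*} [Fintype m] [Fintype n]
    [Field K] (A : Matrix m n K) (h : Function.Injective A.vecMul) :
    Function.Surjective A.mulVec := by
  have hrank : A.rank = Module.finrank K (m → K) := by
    rw [← rank_transpose, rank, mulVecLin_transpose]
    exact LinearMap.finrank_range_of_inj h
  rw [← coe_mulVecLin, ← LinearMap.range_eq_top]
  exact Submodule.eq_top_of_finrank_eq hrank

namespace SimpleGraph

variable {V : Type*} {G : SimpleGraph V}

theorem Reachable.eq_zero_iff_of_forall_adj_add_eq_zero {α : Type*} [AddGroup α] {c : V → α}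
    (hc : ∀ u v, G.Adj u v → c u + c v = 0) {u v : V} (h : G.Reachable u v) :
    c u = 0 ↔ c v = 0 := by
  obtain ⟨p⟩ := h
  induction p with
  | nil => rfl
  | cons hadj _ ih => rw [← ih, eq_neg_of_add_eq_zero_left (hc _ _ hadj), neg_eq_zero]

theorem colorable_two_of_forall_adj_add_eq_zero {α : Type*} [AddCommGroup α] [LinearOrder α]
    [IsOrderedAddMonoid α] {c : V → α} (hconn : G.Preconnected)
    (hc : ∀ u v, G.Adj u v → c u + c v = 0) {v₀ : V} (hv₀ : c v₀ ≠ 0) : G.Colorable 2 := by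
  have hne (v : V) : c v ≠ 0 :=
    ((hconn v₀ v).eq_zero_iff_of_forall_adj_add_eq_zero hc).not.mp hv₀
  refine (Coloring.mk (fun v ↦ decide (0 < c v)) fun {u v} huv ↦ ?_).colorable
  have huv := hc u v huv
  rcases (hne u).lt_or_gt with hu | hu <;> rcases (hne v).lt_or_gt with hv | hv
  · exact absurd huv (add_neg hu hv).ne
  · simp [hu.not_gt, hv]
  · simp [hu, hv.not_gt]
  · exact absurd huv (add_pos hu hv).ne'

variable [Fintype V] [DecidableEq V] [DecidableRel G.Adj]

theorem incMatrix_mulVec_apply {R : Type*} [NonAssocSemiring R] (ω : Sym2 V → R) (v : V) :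
    (G.incMatrix R *ᵥ ω) v = ∑ e ∈ G.incidenceFinset v, ω e := by
  simp only [mulVec, dotProduct, incMatrix_apply', ite_mul, one_mul, zero_mul,
    ← Finset.sum_filter]
  congr 1
  ext e
  simp

theorem vecMul_incMatrix_apply_of_adj {R : Type*} [NonAssocSemiring R] (c : V → R) {u v : V}
    (h : G.Adj u v) : (c ᵥ* G.incMatrix R) s(u, v) = c u + c v := by
  have hends : ({w | s(u, v) ∈ G.incidenceSet w} : Finset V) = {u, v} := by
    ext w
    simp [mk'_mem_incidenceSet_iff, h]
  simp only [vecMul, dotProduct, incMatrix_apply', mul_ite, mul_one, mul_zero,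
    ← Finset.sum_filter]
  rw [hends, Finset.sum_pair h.ne]

theorem vecMul_incMatrix_injective {R : Type*} [CommRing R] [LinearOrder R] [IsOrderedRing R]
    (hconn : G.Connected) (hnb : ¬ G.Colorable 2) : Function.Injective (G.incMatrix R).vecMul := by
  rw [← coe_vecMulLinear, injective_iff_map_eq_zero]
  intro c hc
  by_contra hne
  obtain ⟨v₀, hv₀⟩ := Function.ne_iff.mp hne
  refine hnb (colorable_two_of_forall_adj_add_eq_zero hconn.preconnected (fun u v h ↦ ?_) hv₀)
  rw [← vecMul_incMatrix_apply_of_adj c h]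
  exact congrFun hc _

theorem incMatrix_mulVec_surjective {K : Type*} [Field K] [LinearOrder K] [IsOrderedRing K]
    (hconn : G.Connected) (hnb : ¬ G.Colorable 2) : Function.Surjective (G.incMatrix K).mulVec :=
  (G.incMatrix K).mulVec_surjective_of_vecMul_injective (vecMul_incMatrix_injective hconn hnb)

end SimpleGraph

/-- A connected non-bipartite simple graph admits a `γ`-ℝ-flow for every `γ : V → ℝ`. -/
theorem stmt_4 {V : Type*} [Fintype V] [DecidableEq V] (G : SimpleGraph V) [DecidableRel G.Adj]
    (hconn : G.Connected) (hnb : ¬ G.Colorable 2) (γ : V → ℝ) :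
    ∃ ω : Sym2 V → ℝ, ∀ v, ∑ e ∈ G.incidenceFinset v, ω e = γ v := by
  obtain ⟨ω, hω⟩ := G.incMatrix_mulVec_surjective hconn hnb γ
  exact ⟨ω, fun v ↦ by rw [← G.incMatrix_mulVec_apply, hω]⟩
end

section
/- Let G be a connected non-bipartite simple graph and γ : V(G) → Z an integer-valued function. Then there exists ω : E(G) → R with 2ω(e) ∈ Z for every edge e, such that for every vertex v the sum of ω over edges incident to v equals γ(v). -/
/-!
A closed walk of odd length `a = v₀, v₁, …, v₂ₖ₊₁ = a` carries the weighting `+1, -1, +1, …, +1`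
on its successive edges; at every inner visit of a vertex the two adjacent edges cancel, while at
`a` the first and last edge both contribute `+1`. This is an integer `2 δₐ`-flow. A connected
non-bipartite graph has such a walk at every vertex (walk to an odd cycle, around it, and back),
so `∑ₐ γ(a) · (weighting of the walk at a) / 2` is a half-integral `γ`-flow.
-/

open Finset

namespace SimpleGraph

variable {V : Type*} {G : SimpleGraph V}

lemma Connected.exists_odd_loop (hconn : G.Connected) (hnb : ¬ G.Colorable 2) (a : V) :
    ∃ w : G.Walk a a, Odd w.length := by
  obtain ⟨u, w, hw⟩ : ∃ u, ∃ w : G.Walk u u, Odd w.length := by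
    simpa [two_colorable_iff_forall_loop_even] using hnb
  obtain ⟨p⟩ := hconn.preconnected a u
  refine ⟨p.append (w.append p.reverse), ?_⟩
  obtain ⟨k, hk⟩ := hw
  exact ⟨p.length + k, by simp only [Walk.length_append, Walk.length_reverse]; lia⟩

variable [DecidableEq V]

namespace Walk

def alternatingWeight : {a b : V} → G.Walk a b → Sym2 V → ℤ
  | _, _, nil => 0
  | a, _, cons (v := b) _ p => Pi.single s(a, b) 1 - p.alternatingWeight

end Walk

variable [G.LocallyFinite]

lemma sum_incidenceFinset_single_edge {a b : V} (h : G.Adj a b) (v : V) :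
    ∑ e ∈ G.incidenceFinset v, (Pi.single s(a, b) 1 : Sym2 V → ℤ) e =
      (if v = a then 1 else 0) + (if v = b then 1 else 0) := by
  simp only [sum_pi_single', mem_incidenceFinset, mk'_mem_incidenceSet_iff, h, true_and]
  rcases eq_or_ne v a with rfl | hva
  · simp [h.ne]
  · by_cases hvb : v = b <;> simp [hva, hvb, h.ne']

namespace Walk

lemma sum_incidenceFinset_alternatingWeight {a c : V} (p : G.Walk a c) (v : V) :
    ∑ e ∈ G.incidenceFinset v, p.alternatingWeight e =
      (if v = a then 1 else 0) - (-1) ^ p.length * (if v = c then 1 else 0) := by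
  induction p with
  | nil => simp [alternatingWeight]
  | cons h p ih =>
    simp only [alternatingWeight, Pi.sub_apply, sum_sub_distrib, ih,
      sum_incidenceFinset_single_edge h, length_cons]
    ring

lemma sum_incidenceFinset_alternatingWeight_of_odd {a : V} (p : G.Walk a a)
    (hp : Odd p.length) (v : V) :
    ∑ e ∈ G.incidenceFinset v, p.alternatingWeight e = 2 * (if v = a then 1 else 0) := by
  rw [sum_incidenceFinset_alternatingWeight, hp.neg_one_pow]
  ring

end Walk

lemma Connected.exists_int_flow_two_mul [Fintype V] (hconn : G.Connected)
    (hnb : ¬ G.Colorable 2) (γ : V → ℤ) :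
    ∃ η : Sym2 V → ℤ, ∀ v, ∑ e ∈ G.incidenceFinset v, η e = 2 * γ v := by
  choose W hW using hconn.exists_odd_loop hnb
  refine ⟨fun e => ∑ a, γ a * (W a).alternatingWeight e, fun v => ?_⟩
  simp only [sum_comm (s := G.incidenceFinset v), ← mul_sum,
    (W _).sum_incidenceFinset_alternatingWeight_of_odd (hW _)]
  simp [mul_comm]

end SimpleGraph

/-- A connected non-bipartite simple graph admits, for any integer-valued `γ`,
a `γ`-flow `ω` such that `2 ω(e)` is an integer for every edge `e`. -/
theorem stmt_5 {V : Type*} [Fintype V] [DecidableEq V] (G : SimpleGraph V) [DecidableRel G.Adj]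
    (hconn : G.Connected) (hnb : ¬ G.Colorable 2) (γ : V → ℤ) :
    ∃ ω : Sym2 V → ℝ, (∀ e ∈ G.edgeSet, ∃ z : ℤ, 2 * ω e = (z : ℝ)) ∧
      ∀ v, ∑ e ∈ G.incidenceFinset v, ω e = (γ v : ℝ) := by
  obtain ⟨η, hη⟩ := hconn.exists_int_flow_two_mul hnb γ
  refine ⟨fun e => η e / 2, fun e _ => ⟨η e, by ring⟩, fun v => ?_⟩
  rw [← sum_div, ← Int.cast_sum, hη]
  push_cast
  ring
end

section
/- Let G be a connected bipartite simple graph with parts V_1, V_2 and γ : V(G) → Z satisfying Σ_{v∈V_1} γ(v) = Σ_{v∈V_2} γ(v). Then there exists an integer-valued edge weighting ω : E(G) → Z whose sum over edges incident to each vertex v equals γ(v). -/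
/-!
Fix a root `r`. A walk from `a` to `r` carrying alternately `+1` and `-1` on its edges has vertex
sums `1` at `a`, `-(-1)^ℓ` at `r` and `0` elsewhere, and in a bipartite graph `(-1)^ℓ` is the
product of the part signs of `a` and `r`. Summing `γ a` times such a walk flow over all `a` gives
vertex sums `γ` everywhere except at `r`, where the defect is a multiple of
`∑_{V₁} γ - ∑_{V₂} γ = 0`.
-/

open Finset

section partSign

variable {V : Type*} [DecidableEq V] (V₁ : Finset V)

def partSign (v : V) : ℤ := if v ∈ V₁ then 1 else -1

lemma partSign_mul_self (v : V) : partSign V₁ v * partSign V₁ v = 1 := by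
  unfold partSign; split_ifs <;> norm_num

lemma partSign_eq_neg_of_mem_iff_not_mem {a b : V} (h : a ∈ V₁ ↔ b ∉ V₁) :
    partSign V₁ a = -partSign V₁ b := by
  unfold partSign; by_cases hb : b ∈ V₁ <;> simp [h, hb]

lemma sum_partSign_mul [Fintype V] (γ : V → ℤ) :
    ∑ v, partSign V₁ v * γ v = ∑ v ∈ V₁, γ v - ∑ v ∈ V₁ᶜ, γ v := by
  rw [← sum_add_sum_compl V₁, sub_eq_add_neg, ← sum_neg_distrib]
  congr 1 <;> refine sum_congr rfl fun v hv => ?_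
  · simp [partSign, hv]
  · simp [partSign, mem_compl.mp hv]

end partSign

namespace SimpleGraph.Walk

variable {V : Type*} [DecidableEq V] {G : SimpleGraph V}

def alternatingFlow : ∀ {a b : V}, G.Walk a b → Sym2 V → ℤ
  | _, _, nil => 0
  | _, _, cons (u := a) (v := c) _ p =>
    fun e => (if e = s(a, c) then 1 else 0) - p.alternatingFlow e

lemma neg_one_pow_length_eq_partSign_mul {V₁ : Finset V}
    (hbip : ∀ u w, G.Adj u w → (u ∈ V₁ ↔ w ∉ V₁)) {a b : V} (p : G.Walk a b) :
    (-1 : ℤ) ^ p.length = partSign V₁ a * partSign V₁ b := by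
  induction p with
  | nil => rw [length_nil, pow_zero, partSign_mul_self]
  | @cons a c b h q ih =>
    rw [length_cons, pow_succ, ih, partSign_eq_neg_of_mem_iff_not_mem V₁ (hbip a c h)]
    ring

variable [Fintype V] [DecidableRel G.Adj]

lemma sum_incidenceFinset_ite_eq_edge {x y : V} (h : G.Adj x y) (u : V) :
    ∑ e ∈ G.incidenceFinset u, (if e = s(x, y) then (1 : ℤ) else 0) =
      if u = x ∨ u = y then 1 else 0 := by
  rw [sum_ite_eq']
  simp [mem_incidenceFinset, incidenceSet, h, Sym2.mem_iff, eq_comm]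

lemma sum_incidenceFinset_alternatingFlow {a b : V} (p : G.Walk a b) (u : V) :
    ∑ e ∈ G.incidenceFinset u, p.alternatingFlow e =
      (if u = a then 1 else 0) - (-1 : ℤ) ^ p.length * (if u = b then 1 else 0) := by
  induction p with
  | nil => simp [alternatingFlow]
  | @cons a c b h q ih =>
    simp only [alternatingFlow, sum_sub_distrib, ih, sum_incidenceFinset_ite_eq_edge h u,
      length_cons, pow_succ]
    have hac : a ≠ c := h.ne
    by_cases hua : u = a <;> by_cases huc : u = c <;> simp_all <;> split_ifs <;> ring

end SimpleGraph.Walk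

open SimpleGraph

/-- A connected bipartite simple graph admits an integer-valued `γ`-flow for any integer-valued
`γ` whose sums over the two parts agree. -/
theorem stmt_7 {V : Type*} [Fintype V] [DecidableEq V] (G : SimpleGraph V) [DecidableRel G.Adj]
    (V₁ : Finset V) (hconn : G.Connected)
    (hbip : ∀ u w, G.Adj u w → (u ∈ V₁ ↔ w ∉ V₁)) (γ : V → ℤ)
    (hγ : ∑ v ∈ V₁, γ v = ∑ v ∈ V₁ᶜ, γ v) :
    ∃ ω : Sym2 V → ℤ, ∀ v, ∑ e ∈ G.incidenceFinset v, ω e = γ v := by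
  obtain ⟨r⟩ := hconn.nonempty
  let p : ∀ v, G.Walk v r := fun v => (hconn.preconnected v r).some
  refine ⟨fun e => ∑ v, γ v * (p v).alternatingFlow e, fun u => ?_⟩
  have hbalance : ∑ v, partSign V₁ v * γ v = 0 := by
    rw [sum_partSign_mul, hγ, sub_self]
  calc ∑ e ∈ G.incidenceFinset u, ∑ v, γ v * (p v).alternatingFlow e
      = ∑ v, γ v * ((if u = v then 1 else 0) -
          partSign V₁ v * partSign V₁ r * (if u = r then 1 else 0)) := by
        simp only [sum_comm (s := G.incidenceFinset u), ← mul_sum,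
          Walk.sum_incidenceFinset_alternatingFlow, Walk.neg_one_pow_length_eq_partSign_mul hbip]
    _ = γ u - partSign V₁ r * (if u = r then 1 else 0) * ∑ v, partSign V₁ v * γ v := by
        simp only [mul_sub, sum_sub_distrib, mul_sum]
        congr 1
        · simp
        · exact sum_congr rfl fun v _ => by ring
    _ = γ u := by rw [hbalance, mul_zero, sub_zero]
end

section
/- Let T be a tree which is a balanced bipartite graph (both parts of the bipartition have equal size). Then the unique 1-sum flow on T is integer-valued, and assigns value 1 to every edge incident to a leaf. -/
/-!
Deleting an edge `vw` of a forest leaves `v` and `w` in different components; let `A` be the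
component of `v`. Summing the vertex conditions over `A` counts `ω(vw)` once, and every other edge
it counts lies inside `A`, hence has an orientation whose side is a proper subset of `A`. By
induction on `|A|`, `ω(vw)` is therefore an integer combination of vertex sums. At a leaf the
vertex condition involves a single edge, so it reads `ω(vw) = 1`.
-/

open Finset

namespace SimpleGraph

variable {V : Type*} [Fintype V] {T : SimpleGraph V}

open Classical in
noncomputable def side (T : SimpleGraph V) (v w : V) : Finset V :=
  {u | (T.deleteEdges {s(v, w)}).Reachable v u}

lemma mem_side {v w u : V} : u ∈ T.side v w ↔ (T.deleteEdges {s(v, w)}).Reachable v u := by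
  classical simp [side]

lemma self_mem_side (v w : V) : v ∈ T.side v w := mem_side.2 .rfl

lemma IsAcyclic.not_mem_side (hT : T.IsAcyclic) {v w : V} (hvw : T.Adj v w) :
    w ∉ T.side v w := by
  rw [mem_side]
  exact isBridge_iff.1 (isAcyclic_iff_forall_adj_isBridge.1 hT hvw)

lemma mem_side_of_adj {v w u x : V} (hu : u ∈ T.side v w) (hux : T.Adj u x)
    (hne : s(u, x) ≠ s(v, w)) : x ∈ T.side v w :=
  mem_side.2 <| (mem_side.1 hu).trans (Adj.reachable (by simp [hne, hux]))

lemma side_subset_side {v w a b : V} (ha : a ∈ T.side v w) (hv : v ∉ T.side a b) :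
    T.side a b ⊆ T.side v w := by
  classical
  intro u hu
  obtain ⟨p⟩ := mem_side.1 hu
  have hp : s(v, w) ∉ p.edges := fun h ↦
    hv (mem_side.2 ⟨p.takeUntil v (p.fst_mem_support_of_mem_edges h)⟩)
  have hsub : ∀ e ∈ p.edges, e ∈ (T.deleteEdges {s(v, w)}).edgeSet := by
    intro e he
    have h := p.edges_subset_edgeSet he
    rw [edgeSet_deleteEdges] at h ⊢
    exact ⟨h.1, by rintro rfl; exact hp he⟩
  exact mem_side.2 ((mem_side.1 ha).trans ⟨p.transfer _ hsub⟩)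

lemma IsAcyclic.exists_side_ssubset (hT : T.IsAcyclic) {v w a b : V} (hab : T.Adj a b)
    (hne : s(a, b) ≠ s(v, w)) (ha : a ∈ T.side v w) :
    ∃ x y, s(x, y) = s(a, b) ∧ T.side x y ⊂ T.side v w := by
  have hb : b ∈ T.side v w := mem_side_of_adj ha hab hne
  have strict {x y : V} (hx : x ∈ T.side v w) (hv : v ∉ T.side x y) : T.side x y ⊂ T.side v w :=
    (ssubset_iff_of_subset (side_subset_side hx hv)).2 ⟨v, self_mem_side v w, hv⟩
  by_cases hv : v ∈ T.side a b
  · refine ⟨b, a, Sym2.eq_swap, strict hb fun hv' ↦ hT.not_mem_side hab ?_⟩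
    rw [mem_side, Sym2.eq_swap] at hv'
    exact mem_side.2 ((mem_side.1 hv).trans hv'.symm)
  · exact ⟨a, b, rfl, strict ha hv⟩

variable [DecidableEq V]

lemma IsAcyclic.filter_side_mem_self (hT : T.IsAcyclic) {v w : V} (hvw : T.Adj v w) :
    {u ∈ T.side v w | u ∈ s(v, w)} = {v} := by
  ext u
  simp only [mem_filter, mem_singleton, Sym2.mem_iff]
  constructor
  · rintro ⟨hu, rfl | rfl⟩
    · rfl
    · exact absurd hu (hT.not_mem_side hvw)
  · rintro rfl
    exact ⟨self_mem_side _ _, .inl rfl⟩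

variable [DecidableRel T.Adj]

lemma sum_sum_incidenceFinset {M : Type*} [AddCommMonoid M] (S : Finset V) (ω : Sym2 V → M) :
    ∑ u ∈ S, ∑ e ∈ T.incidenceFinset u, ω e = ∑ e ∈ T.edgeFinset, #{u ∈ S | u ∈ e} • ω e := by
  simp_rw [incidenceFinset_eq_filter, sum_filter]
  rw [sum_comm]
  refine sum_congr rfl fun e _ ↦ ?_
  rw [← sum_filter, sum_const]

lemma incidenceFinset_eq_singleton_of_degree_eq_one {v w : V} (hvw : T.Adj v w)
    (hv : T.degree v = 1) : T.incidenceFinset v = {s(v, w)} := by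
  have hmem : s(v, w) ∈ T.incidenceFinset v :=
    (mem_incidenceFinset _ _ _).2 ⟨hvw, Sym2.mem_mk_left _ _⟩
  exact (eq_of_subset_of_card_le (singleton_subset_iff.2 hmem)
      (by rw [card_incidenceFinset_eq_degree, hv, card_singleton])).symm

lemma IsAcyclic.apply_eq_sum_sub {M : Type*} [AddCommGroup M] (hT : T.IsAcyclic)
    (ω : Sym2 V → M) {v w : V} (hvw : T.Adj v w) :
    ω s(v, w) = ∑ u ∈ T.side v w, ∑ e ∈ T.incidenceFinset u, ω e -
      ∑ e ∈ T.edgeFinset.erase s(v, w), #{u ∈ T.side v w | u ∈ e} • ω e := by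
  rw [sum_sum_incidenceFinset, ← add_sum_erase _ _ (mem_edgeFinset.2 (T.mem_edgeSet.2 hvw)),
    hT.filter_side_mem_self hvw, card_singleton, one_smul, add_sub_cancel_right]

theorem IsAcyclic.apply_mem_of_sum_incidenceFinset_mem {M : Type*} [AddCommGroup M]
    (hT : T.IsAcyclic) {H : AddSubgroup M} (ω : Sym2 V → M)
    (hω : ∀ v, ∑ e ∈ T.incidenceFinset v, ω e ∈ H) {v w : V} (hvw : T.Adj v w) :
    ω s(v, w) ∈ H := by
  induction hn : #(T.side v w) using Nat.strong_induction_on generalizing v w with | _ n ih => ?_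
  rw [hT.apply_eq_sum_sub ω hvw]
  refine H.sub_mem (H.sum_mem fun u _ ↦ hω u) (H.sum_mem fun f hf ↦ ?_)
  obtain ⟨hne, hf⟩ := mem_erase.1 hf
  obtain h0 | ⟨a, ha⟩ := {u ∈ T.side v w | u ∈ f}.eq_empty_or_nonempty
  · simp [h0]
  obtain ⟨haA, haf⟩ := mem_filter.1 ha
  obtain ⟨b, rfl⟩ := Sym2.mem_iff_exists.1 haf
  have hab : T.Adj a b := mem_edgeFinset.1 hf
  obtain ⟨x, y, hxy, hlt⟩ := hT.exists_side_ssubset hab hne haA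
  have hxy' : T.Adj x y := by rwa [← mem_edgeSet, hxy]
  rw [← hxy]
  exact H.nsmul_mem (ih _ (hn ▸ card_lt_card hlt) hxy' rfl) _

end SimpleGraph

open SimpleGraph in
theorem stmt_8_general {V : Type*} [Fintype V] [DecidableEq V] (T : SimpleGraph V) [DecidableRel T.Adj]
    (htree : T.IsTree)
    (ω : Sym2 V → ℝ)
    (hflow : ∀ v, ∑ e ∈ T.incidenceFinset v, ω e = 1) :
    (∀ e ∈ T.edgeSet, ∃ z : ℤ, ω e = (z : ℝ)) ∧
      ∀ v w, T.Adj v w → T.degree v = 1 → ω s(v, w) = 1 := by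
  refine ⟨fun e he ↦ ?_, fun v w hvw hv ↦ ?_⟩
  · induction e with | h v w => ?_
    obtain ⟨z, hz⟩ := htree.isAcyclic.apply_mem_of_sum_incidenceFinset_mem
      (H := (Int.castAddHom ℝ).range) ω (fun v ↦ ⟨1, by simp [hflow]⟩) he
    exact ⟨z, hz.symm⟩
  · simpa [incidenceFinset_eq_singleton_of_degree_eq_one hvw hv] using hflow v

/-- On a balanced bipartite tree, the (unique) 1-sum flow is integer-valued and assigns the
value `1` to every edge incident to a leaf. -/
theorem stmt_8 {V : Type*} [Fintype V] [DecidableEq V] (T : SimpleGraph V) [DecidableRel T.Adj]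
    (htree : T.IsTree) (V₁ : Finset V)
    (hbip : ∀ u w, T.Adj u w → (u ∈ V₁ ↔ w ∉ V₁)) (hbal : V₁.card = V₁ᶜ.card)
    (ω : Sym2 V → ℝ) (hsupp : ∀ e ∉ T.edgeSet, ω e = 0)
    (hflow : ∀ v, ∑ e ∈ T.incidenceFinset v, ω e = 1) :
    (∀ e ∈ T.edgeSet, ∃ z : ℤ, ω e = (z : ℝ)) ∧
      ∀ v w, T.Adj v w → T.degree v = 1 → ω s(v, w) = 1 :=
  stmt_8_general T htree ω hflow
end

section
/- Let T be a tree on n ≥ 4 vertices that is a balanced bipartite graph, with bipartition V_1 ∪ V_2, |V_1| = |V_2|. Then both V_1 and V_2 contain a leaf of T. -/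
/-!
On either side of a bipartite graph the degrees sum to the number of edges, which for a tree on
`n` vertices is `n - 1`. A side with `n / 2` vertices and no leaf would have all degrees at
least `2` (a nontrivial connected graph has no isolated vertex), hence degree sum at least `n`.
-/

open Finset SimpleGraph

theorem isBipartiteWith_compl_of_adj_mem_iff {V : Type*} [Fintype V] [DecidableEq V]
    {G : SimpleGraph V} {s : Finset V} (h : ∀ u w, G.Adj u w → (u ∈ s ↔ w ∉ s)) :
    G.IsBipartiteWith ↑s ↑sᶜ where
  disjoint := by simpa using disjoint_compl_right
  mem_of_adj u w huw := by
    have := h u w huw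
    simp only [mem_coe, mem_compl]
    tauto

theorem SimpleGraph.Preconnected.exists_degree_eq_one_of_card_edgeFinset_lt
    {V : Type*} [Fintype V] [Nontrivial V] {G : SimpleGraph V} [DecidableRel G.Adj]
    (hG : G.Preconnected) {s t : Finset V} (hst : G.IsBipartiteWith ↑s ↑t)
    (hlt : #G.edgeFinset < 2 * #s) : ∃ v ∈ s, G.degree v = 1 := by
  by_contra! hleaf
  have hdeg (v) (hv : v ∈ s) : 2 ≤ G.degree v := by
    have := hG.degree_pos_of_nontrivial v
    have := hleaf v hv
    omega
  have hsum := card_nsmul_le_sum s _ 2 hdeg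
  rw [isBipartiteWith_sum_degrees_eq_card_edges hst, smul_eq_mul] at hsum
  omega

theorem SimpleGraph.IsTree.exists_degree_eq_one_of_two_mul_card_eq
    {V : Type*} [Fintype V] {T : SimpleGraph V} [DecidableRel T.Adj] (hT : T.IsTree)
    {s t : Finset V} (hst : T.IsBipartiteWith ↑s ↑t)
    (hs : 2 * #s = Fintype.card V) : ∃ v ∈ s, T.degree v = 1 := by
  have : Nonempty V := hT.connected.nonempty
  have : Nontrivial V := by
    rw [← Fintype.one_lt_card_iff_nontrivial]
    have := Fintype.card_pos (α := V)
    omega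
  refine hT.connected.preconnected.exists_degree_eq_one_of_card_edgeFinset_lt hst ?_
  have := hT.card_edgeFinset
  omega

theorem stmt_9_general {V : Type*} [Fintype V] [DecidableEq V] (T : SimpleGraph V) [DecidableRel T.Adj]
    (htree : T.IsTree) (V₁ : Finset V)
    (hbip : ∀ u w, T.Adj u w → (u ∈ V₁ ↔ w ∉ V₁)) (hbal : V₁.card = V₁ᶜ.card) :
    (∃ v ∈ V₁, T.degree v = 1) ∧ (∃ v ∈ V₁ᶜ, T.degree v = 1) := by
  have hcard : #V₁ + #V₁ᶜ = Fintype.card V := card_add_card_compl V₁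
  have hV₁ := isBipartiteWith_compl_of_adj_mem_iff hbip
  exact ⟨htree.exists_degree_eq_one_of_two_mul_card_eq hV₁ (by omega),
    htree.exists_degree_eq_one_of_two_mul_card_eq hV₁.symm (by omega)⟩

/-- A balanced bipartite tree on at least 4 vertices has a leaf in each part of the
bipartition. -/
theorem stmt_9 {V : Type*} [Fintype V] [DecidableEq V] (T : SimpleGraph V) [DecidableRel T.Adj]
    (htree : T.IsTree) (hn : 4 ≤ Fintype.card V) (V₁ : Finset V)
    (hbip : ∀ u w, T.Adj u w → (u ∈ V₁ ↔ w ∉ V₁)) (hbal : V₁.card = V₁ᶜ.card) :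
    (∃ v ∈ V₁, T.degree v = 1) ∧ (∃ v ∈ V₁ᶜ, T.degree v = 1) :=
  stmt_9_general T htree V₁ hbip hbal
end

section
/- Let G be a non-bipartite graph. Then G admits a 1-sum flow with all values in [0,1] if and only if G has a {1,2}-factor, i.e., a spanning subgraph each of whose connected components is either a single edge K_2 or a cycle. -/
/-!
A 1-sum `[0,1]`-flow `ω` is a fractional perfect matching, so every set `s` of vertices satisfies
`#s = ∑_{v ∈ s} ∑_{u ~ v} ω(vu) ≤ ∑_{u ∈ N(s)} ∑_{v ~ u} ω(uv) = #N(s)`. By Hall's theorem there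
is then an injection, hence a permutation `σ`, with `σ v` adjacent to `v` for all `v`; the edges
`v σ(v)` form a `{1,2}`-factor (2-cycles of `σ` become single edges). Conversely, adjacent vertices
of a `{1,2}`-factor have the same degree `d ∈ {1,2}`, and weight `1/d` on its edges is a flow.
-/

open Finset

namespace SimpleGraph

variable {V : Type*}

def permGraph (σ : Equiv.Perm V) : SimpleGraph V :=
  fromRel fun u w => σ u = w

theorem neighborSet_permGraph (σ : Equiv.Perm V) (hσ : ∀ v, σ v ≠ v) (v : V) :
    (permGraph σ).neighborSet v = {σ v, σ.symm v} := by
  ext w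
  simp only [mem_neighborSet, permGraph, fromRel_adj, Set.mem_insert_iff, Set.mem_singleton_iff,
    Equiv.eq_symm_apply]
  constructor
  · rintro ⟨-, rfl | rfl⟩
    · exact .inl rfl
    · exact .inr rfl
  · rintro (rfl | rfl)
    · exact ⟨(hσ v).symm, .inl rfl⟩
    · exact ⟨hσ w, .inr rfl⟩

theorem ncard_neighborSet_permGraph_eq_one_iff (σ : Equiv.Perm V) (hσ : ∀ v, σ v ≠ v) (v : V) :
    ((permGraph σ).neighborSet v).ncard = 1 ↔ σ (σ v) = v := by
  rw [neighborSet_permGraph σ hσ, ← Equiv.eq_symm_apply]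
  refine ⟨fun h => ?_, fun h => by rw [h, Set.pair_eq_singleton, Set.ncard_singleton]⟩
  by_contra hne
  simp [Set.ncard_pair hne] at h

theorem ncard_neighborSet_permGraph_eq_one_or_two (σ : Equiv.Perm V) (hσ : ∀ v, σ v ≠ v)
    (v : V) :
    ((permGraph σ).neighborSet v).ncard = 1 ∨ ((permGraph σ).neighborSet v).ncard = 2 := by
  rw [neighborSet_permGraph σ hσ]
  rcases eq_or_ne (σ v) (σ.symm v) with h | h
  · left; rw [h, Set.pair_eq_singleton, Set.ncard_singleton]
  · right; exact Set.ncard_pair h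

theorem ncard_neighborSet_permGraph_eq_one_of_adj (σ : Equiv.Perm V) (hσ : ∀ v, σ v ≠ v)
    {v w : V} (hvw : (permGraph σ).Adj v w) (hv : ((permGraph σ).neighborSet v).ncard = 1) :
    ((permGraph σ).neighborSet w).ncard = 1 := by
  rw [ncard_neighborSet_permGraph_eq_one_iff σ hσ] at hv ⊢
  rcases hvw with ⟨-, rfl | rfl⟩
  · exact congrArg σ hv
  · exact σ.injective hv

theorem permGraph_le {G : SimpleGraph V} {σ : Equiv.Perm V} (hσ : ∀ v, G.Adj v (σ v)) :
    permGraph σ ≤ G := by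
  rintro u w ⟨-, rfl | rfl⟩
  · exact hσ u
  · exact (hσ w).symm

variable [Fintype V] [DecidableEq V] (G : SimpleGraph V) [DecidableRel G.Adj]

theorem incidenceFinset_eq_image_neighborFinset (v : V) :
    G.incidenceFinset v = (G.neighborFinset v).image (s(v, ·)) := by
  ext e
  induction e with
  | h a b =>
    simp only [mem_incidenceFinset, mk'_mem_incidenceSet_iff, mem_image, mem_neighborFinset,
      Sym2.eq_iff]
    constructor
    · rintro ⟨hab, rfl | rfl⟩
      · exact ⟨b, hab, .inl ⟨rfl, rfl⟩⟩
      · exact ⟨a, hab.symm, .inr ⟨rfl, rfl⟩⟩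
    · rintro ⟨u, hu, ⟨rfl, rfl⟩ | ⟨rfl, rfl⟩⟩
      · exact ⟨hu, .inl rfl⟩
      · exact ⟨hu.symm, .inr rfl⟩

theorem sum_incidenceFinset_eq_sum_neighborFinset {M : Type*} [AddCommMonoid M]
    (f : Sym2 V → M) (v : V) :
    ∑ e ∈ G.incidenceFinset v, f e = ∑ u ∈ G.neighborFinset v, f s(v, u) := by
  rw [incidenceFinset_eq_image_neighborFinset, sum_image]
  exact fun _ _ _ _ h => Sym2.congr_right.mp h

section FractionalMatching

variable {G} {ω : Sym2 V → ℝ} (hω : ∀ e ∈ G.edgeSet, 0 ≤ ω e)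
  (hsum : ∀ v, ∑ e ∈ G.incidenceFinset v, ω e = 1)
include hω hsum

theorem card_le_card_biUnion_neighborFinset_of_sum_incidenceFinset_eq_one (s : Finset V) :
    #s ≤ #(s.biUnion fun v => G.neighborFinset v) := by
  set T := s.biUnion fun v => G.neighborFinset v
  have hsum' v : ∑ u ∈ G.neighborFinset v, ω s(v, u) = 1 := by
    rw [← sum_incidenceFinset_eq_sum_neighborFinset]; exact hsum v
  have key : (#s : ℝ) ≤ #T := calc
    (#s : ℝ) = ∑ v ∈ s, ∑ u ∈ G.neighborFinset v, ω s(v, u) := by simp [hsum']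
    _ = ∑ u ∈ T, ∑ v ∈ s ∩ G.neighborFinset u, ω s(v, u) :=
      sum_comm' fun v u => by
        simp only [T, mem_biUnion, mem_inter, mem_neighborFinset]
        exact ⟨fun ⟨hv, h⟩ => ⟨⟨hv, h.symm⟩, v, hv, h⟩,
          fun ⟨⟨hv, h⟩, _⟩ => ⟨hv, h.symm⟩⟩
    _ ≤ ∑ u ∈ T, ∑ v ∈ G.neighborFinset u, ω s(u, v) := by
      gcongr with u
      calc ∑ v ∈ s ∩ G.neighborFinset u, ω s(v, u)
          ≤ ∑ v ∈ G.neighborFinset u, ω s(v, u) :=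
            sum_le_sum_of_subset_of_nonneg inter_subset_right fun v hv _ =>
              hω _ ((G.mem_neighborFinset u v).mp hv).symm
        _ = ∑ v ∈ G.neighborFinset u, ω s(u, v) :=
            sum_congr rfl fun v _ => by rw [Sym2.eq_swap]
    _ = #T := by simp [hsum']
  exact_mod_cast key

theorem exists_perm_adj_of_sum_incidenceFinset_eq_one :
    ∃ σ : Equiv.Perm V, ∀ v, G.Adj v (σ v) := by
  obtain ⟨f, hinj, hf⟩ :=
    (all_card_le_biUnion_card_iff_exists_injective fun v => G.neighborFinset v).mp
      (card_le_card_biUnion_neighborFinset_of_sum_incidenceFinset_eq_one hω hsum)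
  exact ⟨.ofBijective f hinj.bijective_of_finite, fun v => (G.mem_neighborFinset _ _).mp (hf v)⟩

end FractionalMatching

theorem exists_sum_incidenceFinset_eq_one_of_le {H : SimpleGraph V} (hle : H ≤ G)
    (hpos : ∀ v, (H.neighborSet v).ncard ≠ 0)
    (hreg : ∀ v w, H.Adj v w → (H.neighborSet v).ncard = (H.neighborSet w).ncard) :
    ∃ ω : Sym2 V → ℝ, (∀ e ∉ G.edgeSet, ω e = 0) ∧ (∀ e ∈ G.edgeSet, 0 ≤ ω e ∧ ω e ≤ 1) ∧
      ∀ v, ∑ e ∈ G.incidenceFinset v, ω e = 1 := by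
  classical
  let w a b : ℝ := if H.Adj a b then ((H.neighborSet a).ncard : ℝ)⁻¹ else 0
  have hw a b : w a b = w b a := by
    by_cases h : H.Adj a b
    · simp [w, h, h.symm, hreg a b h]
    · simp [w, h, H.adj_comm]
  refine ⟨Sym2.lift ⟨w, hw⟩, fun e he => ?_, fun e _ => ?_, fun v => ?_⟩
  · induction e with
    | h a b =>
      have : ¬H.Adj a b := fun h => he (hle h)
      simp [w, this]
  · induction e with
    | h a b =>
      simp only [Sym2.lift_mk, w]
      split_ifs
      · have : (1 : ℝ) ≤ (H.neighborSet a).ncard := by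
          exact_mod_cast Nat.one_le_iff_ne_zero.mpr (hpos a)
        exact ⟨by positivity, inv_le_one_of_one_le₀ this⟩
      · simp
  · have hN : H.neighborSet v = ↑((G.neighborFinset v).filter (H.Adj v)) := by
      ext u
      simpa using fun h : H.Adj v u => hle h
    rw [sum_incidenceFinset_eq_sum_neighborFinset]
    simp only [Sym2.lift_mk, w]
    rw [← sum_filter, sum_const, nsmul_eq_mul, hN, Set.ncard_coe_finset]
    exact mul_inv_cancel₀ (by exact_mod_cast hN ▸ hpos v)

end SimpleGraph

open SimpleGraph in
theorem stmt_15_general {V : Type*} [Fintype V] [DecidableEq V] (G : SimpleGraph V) [DecidableRel G.Adj] :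
    (∃ ω : Sym2 V → ℝ, (∀ e ∉ G.edgeSet, ω e = 0) ∧ (∀ e ∈ G.edgeSet, 0 ≤ ω e ∧ ω e ≤ 1) ∧
        ∀ v, ∑ e ∈ G.incidenceFinset v, ω e = 1) ↔
      ∃ H : SimpleGraph V, H ≤ G ∧
        (∀ v, (H.neighborSet v).ncard = 1 ∨ (H.neighborSet v).ncard = 2) ∧
        (∀ v w, H.Adj v w → (H.neighborSet v).ncard = 1 → (H.neighborSet w).ncard = 1) := by
  constructor
  · rintro ⟨ω, -, hω, hsum⟩
    obtain ⟨σ, hσ⟩ :=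
      exists_perm_adj_of_sum_incidenceFinset_eq_one (fun e he => (hω e he).1) hsum
    have hσ' v : σ v ≠ v := (hσ v).ne'
    exact ⟨permGraph σ, permGraph_le hσ, ncard_neighborSet_permGraph_eq_one_or_two σ hσ',
      fun v w => ncard_neighborSet_permGraph_eq_one_of_adj σ hσ'⟩
  · rintro ⟨H, hle, hdeg, hmatch⟩
    have hpos v : (H.neighborSet v).ncard ≠ 0 := by rcases hdeg v with h | h <;> omega
    have hreg v w (hvw : H.Adj v w) : (H.neighborSet v).ncard = (H.neighborSet w).ncard := by
      rcases hdeg v with hv | hv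
      · rw [hv, hmatch v w hvw hv]
      · rcases hdeg w with hw | hw
        · rw [hmatch w v hvw.symm hw, hw]
        · rw [hv, hw]
    exact exists_sum_incidenceFinset_eq_one_of_le G hle hpos hreg

/-- A non-bipartite graph admits a 1-sum `[0,1]`-flow if and only if it has a `{1,2}`-factor,
i.e. a spanning subgraph each of whose components is a single edge or a cycle (equivalently,
every vertex has degree 1 or 2, and every neighbor of a degree-1 vertex has degree 1). -/
theorem stmt_15 {V : Type*} [Fintype V] [DecidableEq V] (G : SimpleGraph V) [DecidableRel G.Adj]
    (hnb : ¬ G.Colorable 2) :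
    (∃ ω : Sym2 V → ℝ, (∀ e ∉ G.edgeSet, ω e = 0) ∧ (∀ e ∈ G.edgeSet, 0 ≤ ω e ∧ ω e ≤ 1) ∧
        ∀ v, ∑ e ∈ G.incidenceFinset v, ω e = 1) ↔
      ∃ H : SimpleGraph V, H ≤ G ∧
        (∀ v, (H.neighborSet v).ncard = 1 ∨ (H.neighborSet v).ncard = 2) ∧
        (∀ v w, H.Adj v w → (H.neighborSet v).ncard = 1 → (H.neighborSet w).ncard = 1) :=
  stmt_15_general G
end

section
/- For all positive integers t and s, there exists an s-edge-connected bipartite graph G that admits a 1-sum R-flow but admits no 1-sum flow with all edge values ≥ -t. Specifically, take two disjoint copies of K_{s, s(1+t)+1} with parts (X,Y) and (X',Y'), |X|=|X'|=s, and join one vertex v ∈ X to all s vertices of X'; this graph has no 1-sum [-t,∞)-flow. -/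
/-!
Take two copies of `K_{X,Y}` with `|Y| = |X|(1 + t) + 1` and join every `x ∈ X` to its twin
in the other copy. Weight `1/|X|` on the edges of the copies and `1 - |Y|/|X|` on the matching
edges gives a 1-sum flow. Conversely, for any 1-sum flow the vertex conditions of one copy summed
over `X` give `|X|` = (weight of the copy) + (weight of the matching), and summed over `Y` give
`|Y|` = (weight of the copy). So the `|X|` matching edges carry total weight `|X| - |Y| < -t|X|`.
Edge-connectivity comes from the `|X|` edge-disjoint paths of length two between two vertices of
`Y` in one copy, and from the `|X|` matching edges between the copies.
-/

open Finset Function Sum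

namespace SimpleGraph

variable {V W ι : Type*} {G : SimpleGraph V} {G' : SimpleGraph W} {k : ℕ} {u v w : V}

theorem _root_.Set.exists_disjoint_of_encard_lt {β : Type*} {P : ι → Set β}
    (hP : Pairwise (Disjoint on P)) {F : Set β} (hF : F.encard < ENat.card ι) :
    ∃ i, Disjoint (P i) F := by
  by_contra! h
  choose g hgP hgF using fun i => Set.not_disjoint_iff.mp (h i)
  have hg : Set.InjOn g Set.univ := fun i _ j _ hij =>
    hP.eq (Set.not_disjoint_iff.mpr ⟨g i, hgP i, hij ▸ hgP j⟩)
  have hcard := Set.encard_le_encard_of_injOn (fun i _ => hgF i) hg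
  rw [Set.encard_univ] at hcard
  exact (hcard.trans_lt hF).false

theorem isEdgeReachable_of_edgeDisjoint_walks (p : ι → G.Walk u v)
    (hp : Pairwise (Disjoint on fun i => {e | e ∈ (p i).edges})) (hk : k ≤ ENat.card ι) :
    G.IsEdgeReachable k u v := by
  intro F hF
  obtain ⟨i, hi⟩ := Set.exists_disjoint_of_encard_lt hp (hF.trans_le hk)
  exact ⟨(p i).toDeleteEdges F fun e he heF => Set.disjoint_left.mp hi he heF⟩

theorem isEdgeReachable_via_edges {a b : ι → V} (hab : ∀ i, G.Adj (a i) (b i))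
    (hinj : Injective fun i => s(a i, b i)) (hk : k ≤ ENat.card ι)
    (hua : ∀ i, G.IsEdgeReachable k u (a i)) (hbw : ∀ i, G.IsEdgeReachable k (b i) w) :
    G.IsEdgeReachable k u w := by
  intro F hF
  obtain ⟨i, hi⟩ := Set.exists_disjoint_of_encard_lt (P := fun i => {s(a i, b i)})
    (fun i j hij => by simpa using hinj.ne hij) (hF.trans_le hk)
  have hadj : (G.deleteEdges F).Adj (a i) (b i) :=
    (deleteEdges_adj ..).mpr ⟨hab i, Set.disjoint_singleton_left.mp hi⟩
  exact ((hua i hF).trans hadj.reachable).trans (hbw i hF)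

theorem IsEdgeReachable.map (f : G ↪g G') (h : G.IsEdgeReachable k u v) :
    G'.IsEdgeReachable k (f u) (f v) := by
  intro F hF
  have hF' : (Sym2.map f ⁻¹' F).encard < k :=
    lt_of_le_of_lt (Set.encard_le_encard_of_injOn (f := Sym2.map f) (fun _ he => he)
      (Sym2.map.injective f.injective).injOn) hF
  let f' : G.deleteEdges (Sym2.map f ⁻¹' F) →g G'.deleteEdges F :=
    ⟨f, fun {a b} h => by
      rw [deleteEdges_adj] at h ⊢
      exact ⟨f.map_adj_iff.mpr h.1, by simpa using h.2⟩⟩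
  exact (h hF').map f'

theorem Iso.isEdgeConnected (φ : G ≃g G') (h : G.IsEdgeConnected k) : G'.IsEdgeConnected k :=
  fun u v => by simpa using (h (φ.symm u) (φ.symm v)).map φ.toEmbedding

theorem IsEdgeConnected.connected_deleteEdges [Nonempty V] (h : G.IsEdgeConnected k)
    {F : Set (Sym2 V)} (hF : F.encard < k) : (G.deleteEdges F).Connected :=
  ⟨fun u v => h u v hF⟩

theorem _root_.Sym2.sum_ite_mem [Fintype V] [DecidableEq V] {M : Type*} [AddCommMonoid M]
    (f : Sym2 V → M) (v : V) : ∑ e : Sym2 V, (if v ∈ e then f e else 0) = ∑ u, f s(v, u) := by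
  rw [← Finset.sum_filter, ← Finset.sum_image (fun _ _ _ _ h => Sym2.congr_right.mp h)]
  congr 1
  ext e
  simp [Sym2.mem_iff_exists, eq_comm]

section Flow

variable [Fintype V] [DecidableEq V]

def IsOneSumFlow (G : SimpleGraph V) (L : Set ℝ) (ω : Sym2 V → ℝ) : Prop :=
  (∀ e ∉ G.edgeSet, ω e = 0) ∧ (∀ e ∈ G.edgeSet, ω e ∈ L) ∧
    ∀ v, ∑ e : Sym2 V, (if v ∈ e then ω e else 0) = 1

theorem IsOneSumFlow.map [Fintype W] [DecidableEq W] {L : Set ℝ} {ω : Sym2 V → ℝ}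
    (φ : G ≃g G') (h : G.IsOneSumFlow L ω) : G'.IsOneSumFlow L (ω ∘ Sym2.map φ.symm) := by
  refine ⟨fun e he => h.1 _ (by rwa [φ.symm.map_mem_edgeSet_iff]),
    fun e he => h.2.1 _ (by rwa [φ.symm.map_mem_edgeSet_iff]), fun w => ?_⟩
  rw [Sym2.sum_ite_mem]
  simp only [comp_apply, Sym2.map_mk]
  exact (Equiv.sum_comp φ.symm.toEquiv (fun u => ω s(φ.symm w, u))).trans
    ((Sym2.sum_ite_mem ω _).symm.trans (h.2.2 _))

theorem IsOneSumFlow.sum_adj [DecidableRel G.Adj] {L : Set ℝ} {ω : Sym2 V → ℝ}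
    (h : G.IsOneSumFlow L ω) (v : V) : ∑ u, (if G.Adj v u then ω s(v, u) else 0) = 1 := by
  rw [← h.2.2 v, Sym2.sum_ite_mem]
  refine Finset.sum_congr rfl fun u _ => ?_
  split_ifs with huv
  · rfl
  · exact (h.1 _ huv).symm

end Flow

variable (X Y : Type*)

/-- Two copies `c = false, true` of the complete bipartite graph between `X` (`inl`) and
`Y` (`inr`), with `(false, inl x)` joined to `(true, inl x)` for every `x`. -/
def matchedBipartitePair : SimpleGraph (Bool × (X ⊕ Y)) where
  Adj
    | (c, inl x), (c', inl x') => c ≠ c' ∧ x = x'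
    | (c, inl _), (c', inr _) => c = c'
    | (c, inr _), (c', inl _) => c = c'
    | (_, inr _), (_, inr _) => False
  symm := ⟨by rintro ⟨c, x | y⟩ ⟨c', x' | y'⟩ h <;> simp_all [eq_comm]⟩
  loopless := ⟨by rintro ⟨c, x | y⟩ h <;> simp_all⟩

namespace matchedBipartitePair

variable {X Y}

instance [DecidableEq X] : DecidableRel (matchedBipartitePair X Y).Adj
  | (c, inl x), (c', inl x') => inferInstanceAs (Decidable (c ≠ c' ∧ x = x'))
  | (c, inl _), (c', inr _) => inferInstanceAs (Decidable (c = c'))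
  | (c, inr _), (c', inl _) => inferInstanceAs (Decidable (c = c'))
  | (_, inr _), (_, inr _) => inferInstanceAs (Decidable False)

@[simp] theorem adj_inl_inl {c c' : Bool} {x x' : X} :
    (matchedBipartitePair X Y).Adj (c, inl x) (c', inl x') ↔ c ≠ c' ∧ x = x' := Iff.rfl

@[simp] theorem adj_inl_inr {c c' : Bool} {x : X} {y : Y} :
    (matchedBipartitePair X Y).Adj (c, inl x) (c', inr y) ↔ c = c' := Iff.rfl

@[simp] theorem adj_inr_inl {c c' : Bool} {x : X} {y : Y} :
    (matchedBipartitePair X Y).Adj (c, inr y) (c', inl x) ↔ c = c' := Iff.rfl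

@[simp] theorem not_adj_inr_inr {c c' : Bool} {y y' : Y} :
    ¬ (matchedBipartitePair X Y).Adj (c, inr y) (c', inr y') := id

theorem colorable_two : (matchedBipartitePair X Y).Colorable 2 := by
  simpa using (Coloring.mk (G := matchedBipartitePair X Y) (fun v => xor v.1 v.2.isLeft)
    (by rintro ⟨c, x | y⟩ ⟨c', x' | y'⟩ h <;> cases c <;> cases c' <;> simp_all)).colorable

section EdgeConnectivity

variable [Fintype X]

theorem isEdgeReachable_inr_inr (c : Bool) (y y' : Y) :
    (matchedBipartitePair X Y).IsEdgeReachable (Fintype.card X) (c, inr y) (c, inr y') := by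
  obtain rfl | hyy' := eq_or_ne y y'
  · rfl
  refine isEdgeReachable_of_edgeDisjoint_walks
    (fun x => .cons (v := (c, inl x)) (adj_inr_inl.mpr rfl) (.cons (adj_inl_inr.mpr rfl) .nil))
    (fun x x' hxx' => ?_) (by simp)
  simp [Set.disjoint_left, hxx', hyy', hyy'.symm]

variable [Fintype Y] (hXY : Fintype.card X ≤ Fintype.card Y)
include hXY

theorem isEdgeReachable_inl_inr (c : Bool) (x : X) (y : Y) :
    (matchedBipartitePair X Y).IsEdgeReachable (Fintype.card X) (c, inl x) (c, inr y) :=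
  isEdgeReachable_via_edges (a := fun _ => (c, inl x)) (b := fun y' => (c, inr y'))
    (fun _ => adj_inl_inr.mpr rfl) (fun y₁ y₂ h => by simpa using h) (by simpa using hXY)
    (fun _ => .rfl) (fun y' => isEdgeReachable_inr_inr c y' y)

theorem isEdgeReachable_same_copy (c : Bool) (z z' : X ⊕ Y) :
    (matchedBipartitePair X Y).IsEdgeReachable (Fintype.card X) (c, z) (c, z') := by
  rcases z with x | y <;> rcases z' with x' | y'
  · obtain ⟨y⟩ : Nonempty Y :=
      Fintype.card_pos_iff.mp ((Fintype.card_pos_iff.mpr ⟨x⟩).trans_le hXY)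
    exact (isEdgeReachable_inl_inr hXY c x y).trans (isEdgeReachable_inl_inr hXY c x' y).symm
  · exact isEdgeReachable_inl_inr hXY c x y'
  · exact (isEdgeReachable_inl_inr hXY c x' y).symm
  · exact isEdgeReachable_inr_inr c y y'

theorem isEdgeConnected : (matchedBipartitePair X Y).IsEdgeConnected (Fintype.card X) := by
  rintro ⟨c, z⟩ ⟨c', z'⟩
  obtain rfl | hcc' := eq_or_ne c c'
  · exact isEdgeReachable_same_copy hXY c z z'
  · exact isEdgeReachable_via_edges (a := fun x => (c, inl x)) (b := fun x => (c', inl x))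
      (fun _ => adj_inl_inl.mpr ⟨hcc', rfl⟩) (fun x₁ x₂ h => by simpa [hcc'] using h) (by simp)
      (fun x => isEdgeReachable_same_copy hXY c z (inl x))
      (fun x => isEdgeReachable_same_copy hXY c' (inl x) z')

end EdgeConnectivity

variable [Fintype X] [Fintype Y] [DecidableEq X] [DecidableEq Y]

noncomputable def balancedFlow : Sym2 (Bool × (X ⊕ Y)) → ℝ :=
  Sym2.lift ⟨fun u v => if (matchedBipartitePair X Y).Adj u v then
      (if u.2.isLeft ∧ v.2.isLeft then 1 - Fintype.card Y / Fintype.card X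
        else 1 / Fintype.card X)
      else 0,
    fun u v => by simp only [adj_comm, and_comm]⟩

theorem isOneSumFlow_balancedFlow [Nonempty X] :
    (matchedBipartitePair X Y).IsOneSumFlow Set.univ balancedFlow := by
  refine ⟨fun e he => ?_, fun _ _ => trivial, fun v => ?_⟩
  · induction e using Sym2.ind with
    | _ u v => simp_all [balancedFlow]
  · rw [Sym2.sum_ite_mem]
    rcases v with ⟨c, x | y⟩ <;> cases c <;>
      simp [balancedFlow, Fintype.sum_prod_type, Fintype.sum_sum_type, div_eq_mul_inv]

theorem sum_matching_eq_of_isOneSumFlow {L : Set ℝ} {ω : Sym2 (Bool × (X ⊕ Y)) → ℝ}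
    (h : (matchedBipartitePair X Y).IsOneSumFlow L ω) :
    ∑ x, ω s((true, inl x), (false, inl x)) = Fintype.card X - Fintype.card Y := by
  have hX (x : X) :
      ∑ y, ω s((true, inl x), (true, inr y)) + ω s((true, inl x), (false, inl x)) = 1 := by
    simpa [Fintype.sum_prod_type, Fintype.sum_sum_type, add_comm] using h.sum_adj (true, inl x)
  have hY (y : Y) : ∑ x, ω s((true, inr y), (true, inl x)) = 1 := by
    simpa [Fintype.sum_prod_type, Fintype.sum_sum_type] using h.sum_adj (true, inr y)
  have hXY : ∑ x, ∑ y, ω s((true, inl x), (true, inr y)) = Fintype.card Y := by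
    rw [Finset.sum_comm]
    simpa [Sym2.eq_swap] using Finset.sum_congr rfl fun y (_ : y ∈ univ) => hY y
  have hsum := Finset.sum_congr rfl fun x (_ : x ∈ univ) => hX x
  rw [Finset.sum_add_distrib, hXY] at hsum
  simp only [sum_const, card_univ, nsmul_eq_mul, mul_one] at hsum
  linarith

theorem not_isOneSumFlow_Ici {t : ℝ} (hXY : Fintype.card X * (1 + t) < Fintype.card Y)
    (ω : Sym2 (Bool × (X ⊕ Y)) → ℝ) :
    ¬ (matchedBipartitePair X Y).IsOneSumFlow (Set.Ici (-t)) ω := by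
  intro h
  have hle : ∑ _x : X, -t ≤ ∑ x, ω s((true, inl x), (false, inl x)) :=
    Finset.sum_le_sum fun x _ => h.2.1 _ (by simp)
  rw [sum_matching_eq_of_isOneSumFlow h] at hle
  simp only [sum_neg_distrib, sum_const, card_univ, nsmul_eq_mul] at hle
  linarith

end matchedBipartitePair

end SimpleGraph

open SimpleGraph

theorem stmt_19_general (t s : ℕ) (hs : 0 < s) :
    ∃ (N : ℕ) (G : SimpleGraph (Fin N)),
      G.Colorable 2 ∧
      (∀ F : Set (Sym2 (Fin N)), F.ncard < s → (G.deleteEdges F).Connected) ∧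
      (∃ ω : Sym2 (Fin N) → ℝ, (∀ e ∉ G.edgeSet, ω e = 0) ∧
        ∀ v, ∑ e : Sym2 (Fin N), (if v ∈ e then ω e else 0) = 1) ∧
      ¬ ∃ ω : Sym2 (Fin N) → ℝ, (∀ e ∉ G.edgeSet, ω e = 0) ∧
        (∀ e ∈ G.edgeSet, -(t : ℝ) ≤ ω e) ∧
        ∀ v, ∑ e : Sym2 (Fin N), (if v ∈ e then ω e else 0) = 1 := by
  have : Nonempty (Fin s) := ⟨⟨0, hs⟩⟩
  let H := matchedBipartitePair (Fin s) (Fin (s * (1 + t) + 1))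
  let φ := Iso.map (Fintype.equivFin _) H
  have := φ.symm.toEquiv.nonempty
  have hconn : (H.map (Fintype.equivFin _).toEmbedding).IsEdgeConnected s := by
    simpa using φ.isEdgeConnected
      (matchedBipartitePair.isEdgeConnected (by simp only [Fintype.card_fin]; nlinarith))
  have hflow := matchedBipartitePair.isOneSumFlow_balancedFlow.map φ
  refine ⟨_, _, matchedBipartitePair.colorable_two.of_hom φ.symm.toHom,
    fun F hF => hconn.connected_deleteEdges ?_, ⟨_, hflow.1, hflow.2.2⟩, ?_⟩
  · rw [← (Set.toFinite F).cast_ncard_eq]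
    exact_mod_cast hF
  · rintro ⟨ω, h0, hlb, hsum⟩
    exact matchedBipartitePair.not_isOneSumFlow_Ici (by simp)
      _ (IsOneSumFlow.map φ.symm ⟨h0, hlb, hsum⟩)

/-- For all positive integers `t` and `s`, there is an `s`-edge-connected bipartite graph
which admits a 1-sum ℝ-flow but admits no 1-sum flow with all edge values `≥ -t`. -/
theorem stmt_19 (t s : ℕ) (ht : 0 < t) (hs : 0 < s) :
    ∃ (N : ℕ) (G : SimpleGraph (Fin N)),
      G.Colorable 2 ∧
      (∀ F : Set (Sym2 (Fin N)), F.ncard < s → (G.deleteEdges F).Connected) ∧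
      (∃ ω : Sym2 (Fin N) → ℝ, (∀ e ∉ G.edgeSet, ω e = 0) ∧
        ∀ v, ∑ e : Sym2 (Fin N), (if v ∈ e then ω e else 0) = 1) ∧
      ¬ ∃ ω : Sym2 (Fin N) → ℝ, (∀ e ∉ G.edgeSet, ω e = 0) ∧
        (∀ e ∈ G.edgeSet, -(t : ℝ) ≤ ω e) ∧
        ∀ v, ∑ e : Sym2 (Fin N), (if v ∈ e then ω e else 0) = 1 :=
  stmt_19_general t s hs
end
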